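/- arXiv:2303.11887 — 2 statements merged into one kernel-verified Lean document; each statement's English description precedes it below -/
import Mathlib

section
/- Let V ∈ E_k(F_{q^m}^n) and u ∈ V with rank weight k. The map sending an ordered pair (A,B) of elementary linear subspaces with dim A = a, dim B = k−a, and A ⊕ B = V to the projection u^{(A)} is injective (and similarly (A,B) ↦ u^{(B)} is injective). -/
open Module Submodule Set Finset

/-- The `F_q`-rank of a vector over `F_{q^m}`: the rank of its matrix representation
over `F_q`, i.e. the `F_q`-dimension of the span of its entries. -/
noncomputable def rkq (Fq : Type) {Fqm : Type} [Field Fq] [Field Fqm] [Algebra Fq Fqm]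
    {ι : Type} (v : ι → Fqm) : ℕ :=
  Module.finrank Fq (Submodule.span Fq (Set.range v))

/-- The ℓ-sum-rank weight of a vector split into ℓ blocks of length η. -/
noncomputable def wtSR (Fq : Type) {Fqm : Type} [Field Fq] [Field Fqm] [Algebra Fq Fqm]
    {l η : ℕ} (x : Fin l → Fin η → Fqm) : ℕ :=
  ∑ i, rkq Fq (x i)

/-- The ℓ-sum-rank distance. -/
noncomputable def dSR (Fq : Type) {Fqm : Type} [Field Fq] [Field Fqm] [Algebra Fq Fqm]
    {l η : ℕ} (x y : Fin l → Fin η → Fqm) : ℕ :=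
  wtSR Fq (x - y)

/-- The ball of sum-rank radius τ around x. -/
noncomputable def srBall (Fq : Type) {Fqm : Type} [Field Fq] [Field Fqm] [Algebra Fq Fqm]
    {l η : ℕ} (x : Fin l → Fin η → Fqm) (τ : ℕ) : Set (Fin l → Fin η → Fqm) :=
  {y | dSR Fq x y ≤ τ}

/-- The Gaussian binomial coefficient `[n choose t]_q = ∏_{i=1}^t (q^{n-t+i}-1)/(q^i-1)`
(the division is exact). -/
def qBinom (q n t : ℕ) : ℕ :=
  (∏ i ∈ Finset.range t, (q ^ (n - t + (i + 1)) - 1)) / (∏ i ∈ Finset.range t, (q ^ (i + 1) - 1))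

/-- `NMq q n m t`: the number of `m × n` matrices over `F_q` of rank `t`. -/
def NMq (q n m t : ℕ) : ℕ :=
  qBinom q n t * ∏ i ∈ Finset.range t, (q ^ m - q ^ i)

/-- A submodule of `F_{q^m}^n` is an elementary linear subspace if it is spanned by
vectors all of whose entries lie in `F_q`. -/
def IsElementary (Fq : Type) {Fqm : Type} [Field Fq] [Field Fqm] [Algebra Fq Fqm]
    {ι : Type} (V : Submodule Fqm (ι → Fqm)) : Prop :=
  ∃ S : Set (ι → Fqm), (∀ v ∈ S, ∀ i, ∃ c : Fq, v i = algebraMap Fq Fqm c) ∧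
    Submodule.span Fqm S = V

/-! An elementary subspace `A` contains, with every `v`, the vectors `φ ∘ v` for all `F_q`-linear
`φ : F_{q^m} → F_q`, and when `rk_q v = dim A` these vectors span `A`, so `A` is determined by `v`.
In a decomposition `u = u_A + u_B` the ranks of `u_A` and `u_B` are at most `a` and `k - a` and add
up to at least `rk_q u = k`, so both are full and each summand space is determined by its
component of `u`; the two components determine each other through `u`. -/

theorem LinearIndependent.exists_dual_apply_eq_ite {K V ι : Type*} [Field K] [AddCommGroup V]
    [Module K V] [DecidableEq ι] {c : ι → V} (hc : LinearIndependent K c) (j : ι) :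
    ∃ f : Dual K V, ∀ l, f (c l) = if l = j then 1 else 0 := by
  obtain ⟨f, hf⟩ := LinearMap.exists_extend ((Basis.span hc).coord j)
  refine ⟨f, fun l => ?_⟩
  have := LinearMap.congr_fun hf (Basis.span hc l)
  rw [LinearMap.comp_apply, Submodule.subtype_apply, Basis.coord_apply, Basis.repr_self,
    Basis.span_apply] at this
  rw [this, Finsupp.single_apply]

section Elementary

variable {Fq Fqm ι : Type} [Field Fq] [Field Fqm] [Algebra Fq Fqm]

variable (Fq) in
def dualSpan (v : ι → Fqm) : Submodule Fqm (ι → Fqm) :=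
  span Fqm (range fun f : Dual Fq Fqm => fun i => algebraMap Fq Fqm (f (v i)))

theorem dualSpan_le {A : Submodule Fqm (ι → Fqm)} (hA : IsElementary Fq A) {v : ι → Fqm}
    (hv : v ∈ A) : dualSpan Fq v ≤ A := by
  obtain ⟨S, hS, rfl⟩ := hA
  rw [dualSpan, span_le, range_subset_iff]
  induction hv using Submodule.span_induction with
  | mem s hs =>
    intro f
    choose t ht using hS s hs
    have hf : ∀ i, f (s i) = t i * f 1 := fun i => by
      rw [ht i, Algebra.algebraMap_eq_smul_one, map_smul, smul_eq_mul]
    have : (fun i => algebraMap Fq Fqm (f (s i))) = algebraMap Fq Fqm (f 1) • s := by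
      funext i
      rw [Pi.smul_apply, smul_eq_mul, hf, map_mul, ← ht, mul_comm]
    rw [SetLike.mem_coe, this]
    exact smul_mem _ _ (subset_span hs)
  | zero => simp [← Pi.zero_def]
  | add x y _ _ hx hy =>
    intro f
    simpa [Pi.add_def] using add_mem (hx f) (hy f)
  | smul c x _ hx =>
    intro f
    simpa using hx (f ∘ₗ LinearMap.mulLeft Fq c)

theorem rkq_le_finrank_of_forall_eq_sum {κ : Type} [Fintype κ] {v : ι → Fqm} {w : κ → ι → Fq}
    {c : κ → Fqm} (h : ∀ i, v i = ∑ j, w j i • c j) : rkq Fq v ≤ (range c).finrank Fq :=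
  have := FiniteDimensional.span_of_finite Fq (finite_range c)
  Submodule.finrank_mono <| span_le.2 <| range_subset_iff.2 fun i =>
    h i ▸ sum_mem fun j _ => smul_mem _ _ (subset_span (mem_range_self j))

variable [Finite ι]

theorem IsElementary.exists_span_eq {A : Submodule Fqm (ι → Fqm)} (hA : IsElementary Fq A) :
    ∃ w : Fin (finrank Fqm A) → ι → Fq,
      span Fqm (range fun j i => algebraMap Fq Fqm (w j i)) = A := by
  obtain ⟨S, hS, rfl⟩ := hA
  obtain ⟨b, hbS, hspan, -⟩ := exists_fun_fin_finrank_span_eq Fqm S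
  choose w hw using fun j i => hS (b j) (hbS j) i
  have hwb : (fun j i => algebraMap Fq Fqm (w j i)) = b :=
    funext fun j => funext fun i => (hw j i).symm
  exact ⟨w, hwb ▸ hspan⟩

theorem IsElementary.exists_apply_eq_sum {A : Submodule Fqm (ι → Fqm)} (hA : IsElementary Fq A)
    {v : ι → Fqm} (hv : v ∈ A) :
    ∃ (w : Fin (finrank Fqm A) → ι → Fq) (c : Fin (finrank Fqm A) → Fqm),
      span Fqm (range fun j i => algebraMap Fq Fqm (w j i)) = A ∧ ∀ i, v i = ∑ j, w j i • c j := by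
  obtain ⟨w, hw⟩ := hA.exists_span_eq
  rw [← hw, mem_span_range_iff_exists_fun] at hv
  obtain ⟨c, rfl⟩ := hv
  exact ⟨w, c, hw, fun i => by simp [Finset.sum_apply, Algebra.smul_def, mul_comm]⟩

theorem IsElementary.rkq_le_finrank {A : Submodule Fqm (ι → Fqm)} (hA : IsElementary Fq A)
    {v : ι → Fqm} (hv : v ∈ A) : rkq Fq v ≤ finrank Fqm A := by
  obtain ⟨w, c, -, hvc⟩ := hA.exists_apply_eq_sum hv
  calc rkq Fq v ≤ (range c).finrank Fq := rkq_le_finrank_of_forall_eq_sum hvc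
    _ ≤ finrank Fqm A := (finrank_range_le_card c).trans_eq (Fintype.card_fin _)

/- Full rank makes the coefficients `c` linearly independent over `F_q`, so the coordinate
functionals `f` with `f (c l) = δ_{lj}` send `v` to the spanning vectors `w j` of `A`. -/
theorem IsElementary.le_dualSpan {A : Submodule Fqm (ι → Fqm)} (hA : IsElementary Fq A)
    {v : ι → Fqm} (hv : v ∈ A) (hr : rkq Fq v = finrank Fqm A) : A ≤ dualSpan Fq v := by
  obtain ⟨w, c, hw, hvc⟩ := hA.exists_apply_eq_sum hv
  have hc : LinearIndependent Fq c := by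
    have hle := finrank_range_le_card (R := Fq) c
    rw [linearIndependent_iff_card_eq_finrank_span]
    rw [Fintype.card_fin] at hle ⊢
    have := rkq_le_finrank_of_forall_eq_sum hvc
    omega
  rw [← hw, span_le, range_subset_iff]
  intro j
  obtain ⟨f, hf⟩ := hc.exists_dual_apply_eq_ite j
  exact subset_span ⟨f, funext fun i => by simp [hvc, hf]⟩

theorem IsElementary.eq_dualSpan {A : Submodule Fqm (ι → Fqm)} (hA : IsElementary Fq A)
    {v : ι → Fqm} (hv : v ∈ A) (hr : rkq Fq v = finrank Fqm A) : A = dualSpan Fq v :=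
  le_antisymm (hA.le_dualSpan hv hr) (dualSpan_le hA hv)

theorem rkq_add_le (x y : ι → Fqm) : rkq Fq (x + y) ≤ rkq Fq x + rkq Fq y := by
  have := FiniteDimensional.span_of_finite Fq (finite_range x)
  have := FiniteDimensional.span_of_finite Fq (finite_range y)
  calc rkq Fq (x + y) ≤ finrank Fq ↥(span Fq (range x) ⊔ span Fq (range y)) :=
        Submodule.finrank_mono <| span_le.2 <| range_subset_iff.2 fun i =>
          add_mem (mem_sup_left (subset_span (mem_range_self i)))
            (mem_sup_right (subset_span (mem_range_self i)))
    _ ≤ rkq Fq x + rkq Fq y := Submodule.finrank_add_le_finrank_add_finrank _ _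

theorem eq_dualSpan_of_add_eq {A B : Submodule Fqm (ι → Fqm)} (hA : IsElementary Fq A)
    (hB : IsElementary Fq B) {x y : ι → Fqm} (hx : x ∈ A) (hy : y ∈ B)
    (hrk : finrank Fqm A + finrank Fqm B ≤ rkq Fq (x + y)) :
    A = dualSpan Fq x ∧ B = dualSpan Fq y := by
  have hxA := hA.rkq_le_finrank hx
  have hyB := hB.rkq_le_finrank hy
  have := rkq_add_le (Fq := Fq) x y
  exact ⟨hA.eq_dualSpan hx (by omega), hB.eq_dualSpan hy (by omega)⟩

end Elementary

theorem proj_injective_on_elementary_decompositions_general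
    (Fq Fqm : Type) [Field Fq] [Field Fqm] [Algebra Fq Fqm] (n k a : ℕ) (ha : a ≤ k)
    (u : Fin n → Fqm) (hu : rkq Fq u = k)
    (A₁ B₁ A₂ B₂ : Submodule Fqm (Fin n → Fqm))
    (hA₁ : IsElementary Fq A₁) (hB₁ : IsElementary Fq B₁)
    (hA₂ : IsElementary Fq A₂) (hB₂ : IsElementary Fq B₂)
    (hdA₁ : Module.finrank Fqm A₁ = a) (hdB₁ : Module.finrank Fqm B₁ = k - a)
    (hdA₂ : Module.finrank Fqm A₂ = a) (hdB₂ : Module.finrank Fqm B₂ = k - a)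
    (uA₁ uB₁ uA₂ uB₂ : Fin n → Fqm)
    (huA₁ : uA₁ ∈ A₁) (huB₁ : uB₁ ∈ B₁) (hsum₁ : u = uA₁ + uB₁)
    (huA₂ : uA₂ ∈ A₂) (huB₂ : uB₂ ∈ B₂) (hsum₂ : u = uA₂ + uB₂) :
    (uA₁ = uA₂ → A₁ = A₂ ∧ B₁ = B₂) ∧ (uB₁ = uB₂ → A₁ = A₂ ∧ B₁ = B₂) := by
  obtain ⟨rfl, rfl⟩ := eq_dualSpan_of_add_eq hA₁ hB₁ huA₁ huB₁
    (by rw [hdA₁, hdB₁, ← hsum₁, hu]; omega)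
  obtain ⟨rfl, rfl⟩ := eq_dualSpan_of_add_eq hA₂ hB₂ huA₂ huB₂
    (by rw [hdA₂, hdB₂, ← hsum₂, hu]; omega)
  have hsum : uA₁ + uB₁ = uA₂ + uB₂ := hsum₁.symm.trans hsum₂
  refine ⟨fun hA => ?_, fun hB => ?_⟩
  · rw [hA, add_right_inj] at hsum
    rw [hA, hsum]
    exact ⟨rfl, rfl⟩
  · rw [hB, add_left_inj] at hsum
    rw [hB, hsum]
    exact ⟨rfl, rfl⟩

/-- For u of full rank k in the elementary subspace V, the maps (A,B) ↦ u^{(A)} and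
(A,B) ↦ u^{(B)} over decompositions V = A ⊕ B into elementary subspaces are injective. -/
theorem proj_injective_on_elementary_decompositions
    (Fq Fqm : Type) [Field Fq] [Field Fqm] [Algebra Fq Fqm] (n k a : ℕ) (ha : a ≤ k)
    (V : Submodule Fqm (Fin n → Fqm)) (hV : IsElementary Fq V)
    (hdV : Module.finrank Fqm V = k)
    (u : Fin n → Fqm) (huV : u ∈ V) (hu : rkq Fq u = k)
    (A₁ B₁ A₂ B₂ : Submodule Fqm (Fin n → Fqm))
    (hA₁ : IsElementary Fq A₁) (hB₁ : IsElementary Fq B₁)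
    (hA₂ : IsElementary Fq A₂) (hB₂ : IsElementary Fq B₂)
    (hdA₁ : Module.finrank Fqm A₁ = a) (hdB₁ : Module.finrank Fqm B₁ = k - a)
    (hdA₂ : Module.finrank Fqm A₂ = a) (hdB₂ : Module.finrank Fqm B₂ = k - a)
    (hinf₁ : A₁ ⊓ B₁ = ⊥) (hsup₁ : A₁ ⊔ B₁ = V)
    (hinf₂ : A₂ ⊓ B₂ = ⊥) (hsup₂ : A₂ ⊔ B₂ = V)
    (uA₁ uB₁ uA₂ uB₂ : Fin n → Fqm)
    (huA₁ : uA₁ ∈ A₁) (huB₁ : uB₁ ∈ B₁) (hsum₁ : u = uA₁ + uB₁)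
    (huA₂ : uA₂ ∈ A₂) (huB₂ : uB₂ ∈ B₂) (hsum₂ : u = uA₂ + uB₂) :
    (uA₁ = uA₂ → A₁ = A₂ ∧ B₁ = B₂) ∧ (uB₁ = uB₂ → A₁ = A₂ ∧ B₁ = B₂) :=
  proj_injective_on_elementary_decompositions_general Fq Fqm n k a ha u hu A₁ B₁ A₂ B₂ hA₁ hB₁ hA₂
    hB₂ hdA₁ hdB₁ hdA₂ hdB₂ uA₁ uB₁ uA₂ uB₂ huA₁ huB₁ hsum₁ huA₂ huB₂ hsum₂
end

section
/- Fix x ∈ F_{q^m}^n with rank weight r. The number of vectors y ∈ F_{q^m}^n with rank weight 1 such that rk_q(x − y) = r + 1 (equivalently, wt_{SR,1}(x) + wt_{SR,1}(y) = wt_{SR,1}(x − y)) equals (q^n − q^r)(q^m − q^r)/(q − 1). -/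
open Module Submodule Set Finset

/-!
A rank-one vector has the form `(cᵢ • α)ᵢ` with `c ∈ F_qⁿ`, `α ∈ F_{q^m}` nonzero, and `(α, c)` is
determined by it up to `(t • α, t⁻¹ • c)` with `t ∈ F_qˣ`. Subtracting it from `x` raises the rank
exactly when `α` lies outside the column space `span (range x)` (`q^m - q^r` choices) and `c`
outside the row space `{(φ (xᵢ))ᵢ | φ ∈ Dual}` (`q^n - q^r` choices, as row rank equals column
rank). If `c` is not a row vector, a functional separating `α` from the entries of `x - cα` would
exhibit it as one, so `α` lies in their span; otherwise `x - cα` is the image of `x` under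
`id - φ(·) • α`. Dividing the number of pairs by `q - 1` gives the count.
-/

theorem Nat.card_eq_card_range_mul_of_card_fiber {α β : Type*} [Finite α] (g : α → β) {k : ℕ}
    (hg : ∀ a, Nat.card {a' // g a' = g a} = k) : Nat.card α = Nat.card (range g) * k := by
  classical
  have : Fintype (range g) := Fintype.ofFinite _
  rw [← Nat.card_congr (Equiv.sigmaFiberEquiv (rangeFactorization g)), Nat.card_sigma,
    Finset.sum_congr rfl fun b _ => ?_, Finset.sum_const, Finset.card_univ, smul_eq_mul,
    Nat.card_eq_fintype_card]
  obtain ⟨_, a, rfl⟩ := b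
  rw [← hg a]
  exact Nat.card_congr (Equiv.subtypeEquivRight fun a' => Subtype.ext_iff)

theorem Submodule.natCard_compl {K E : Type*} [Field K] [AddCommGroup E] [Module K E] [Finite E]
    (W : Submodule K E) : Nat.card {v : E // v ∉ W} = Nat.card E - Nat.card K ^ finrank K W := by
  classical
  have : Fintype E := Fintype.ofFinite E
  rw [← Module.natCard_eq_pow_finrank, Nat.card_eq_fintype_card, Fintype.card_subtype_compl,
    Nat.card_eq_fintype_card, Nat.card_eq_fintype_card]

section VectorRank

variable {K M ι : Type*} [Field K] [AddCommGroup M] [Module K M] {x : ι → M} {c : ι → K} {α : M}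

variable (K) in
/-- The row space of the `F_q`-matrix of `x`: its rows are `(φ (x i))ᵢ` for `φ` running over the
coordinate functionals of a basis of `M`, and these span all `(φ (x i))ᵢ` with `φ ∈ Dual K M`. -/
def rowSpace (x : ι → M) : Submodule K (ι → K) :=
  LinearMap.range (LinearMap.pi fun i => Module.Dual.eval K M (x i))

theorem mem_rowSpace :
    c ∈ rowSpace K x ↔ ∃ φ : Module.Dual K M, ∀ i, φ (x i) = c i := by
  simp [rowSpace, funext_iff]

theorem span_range_smul_const (hc : c ≠ 0) (α : M) :
    span K (range fun i => c i • α) = K ∙ α := by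
  refine le_antisymm (span_le.2 ?_) (span_le.2 ?_)
  · rintro - ⟨i, rfl⟩
    exact smul_mem _ _ (mem_span_singleton_self α)
  · obtain ⟨i, hi⟩ : ∃ i, c i ≠ 0 := Function.ne_iff.mp hc
    rw [Set.singleton_subset_iff]
    simpa [smul_smul, hi] using smul_mem _ (c i)⁻¹ (subset_span ⟨i, rfl⟩ :
      c i • α ∈ span K (range fun i => c i • α))

theorem finrank_span_range_eq_one_iff {y : ι → M} :
    finrank K (span K (range y)) = 1 ↔
      ∃ c : ι → K, c ≠ 0 ∧ ∃ α : M, α ≠ 0 ∧ y = fun i => c i • α := by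
  constructor
  · intro h
    obtain ⟨v, hv, hspan⟩ := finrank_eq_one_iff'.mp h
    choose c hc using fun i => hspan ⟨y i, subset_span ⟨i, rfl⟩⟩
    have hy : y = fun i => c i • (v : M) := funext fun i => congrArg Subtype.val (hc i).symm
    refine ⟨c, fun hc0 => ?_, v, by simpa using hv, hy⟩
    have : span K (range y) = ⊥ := span_eq_bot.2 (by rintro - ⟨i, rfl⟩; simp [hy, hc0])
    rw [this, finrank_bot] at h
    exact zero_ne_one h
  · rintro ⟨c, hc, α, hα, rfl⟩
    rw [span_range_smul_const hc, finrank_span_singleton hα]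

theorem exists_units_of_smul_const_eq {c c₀ : ι → K} {α α₀ : M} (hc₀ : c₀ ≠ 0) (hα₀ : α₀ ≠ 0)
    (h : (fun i => c i • α) = fun i => c₀ i • α₀) : ∃ t : Kˣ, t • α₀ = α ∧ t⁻¹ • c₀ = c := by
  obtain ⟨i, hi⟩ : ∃ i, c₀ i ≠ 0 := Function.ne_iff.mp hc₀
  have hci : c i • α = c₀ i • α₀ := congrFun h i
  have hci0 : c i ≠ 0 := by
    rintro h0
    rw [h0, zero_smul, eq_comm, smul_eq_zero] at hci
    tauto
  have ht : (c i)⁻¹ * c₀ i ≠ 0 := mul_ne_zero (inv_ne_zero hci0) hi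
  set t := Units.mk0 _ ht
  have hα : t • α₀ = α := by rw [Units.smul_mk0, mul_smul, ← hci, inv_smul_smul₀ hci0]
  refine ⟨t, hα, funext fun j => ?_⟩
  have hcj : (c j * t) • α₀ = c₀ j • α₀ := by
    rw [mul_smul, ← Units.smul_def, hα]
    exact congrFun h j
  rw [Pi.smul_apply, Units.smul_def, ← smul_left_injective K hα₀ hcj, smul_eq_mul, mul_comm,
    Units.val_inv_eq_inv_val, mul_inv_cancel_right₀ t.ne_zero]

theorem span_range_sub_smul_const_le (hα : α ∈ span K (range x)) (c : ι → K) :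
    span K (range (x - fun i => c i • α)) ≤ span K (range x) :=
  span_le.2 <| by
    rintro - ⟨i, rfl⟩
    exact sub_mem (subset_span ⟨i, rfl⟩) (smul_mem _ _ hα)

theorem finrank_span_range_sub_smul_const_le [FiniteDimensional K M] (hc : c ∈ rowSpace K x)
    (α : M) : finrank K (span K (range (x - fun i => c i • α))) ≤ finrank K (span K (range x)) := by
  obtain ⟨φ, hφ⟩ := mem_rowSpace.1 hc
  have : (x - fun i => c i • α) = (LinearMap.id - φ.smulRight α : M →ₗ[K] M) ∘ x := by
    funext i
    simp [hφ]
  rw [this, range_comp, span_image]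
  exact finrank_map_le _ _

theorem mem_span_range_sub_smul_const (hc : c ∉ rowSpace K x) (α : M) :
    α ∈ span K (range (x - fun i => c i • α)) := by
  by_contra hW
  obtain ⟨f, hfα, hf⟩ := exists_dual_map_eq_bot_of_notMem hW inferInstance
  refine hc (mem_rowSpace.2 ⟨(f α)⁻¹ • f, fun i => ?_⟩)
  have : f (x i - c i • α) = 0 := LinearMap.le_ker_iff_map.2 hf (subset_span ⟨i, rfl⟩)
  rw [map_sub, map_smul, sub_eq_zero] at this
  rw [LinearMap.smul_apply, this, smul_eq_mul, smul_eq_mul, mul_comm (c i),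
    inv_mul_cancel_left₀ hfα]

theorem span_range_sub_smul_const_eq_sup (hc : c ∉ rowSpace K x) (α : M) :
    span K (range (x - fun i => c i • α)) = span K (range x) ⊔ K ∙ α := by
  have hαW := mem_span_range_sub_smul_const hc α
  refine le_antisymm (span_le.2 ?_) (sup_le (span_le.2 ?_) ((span_singleton_le_iff_mem _ _).2 hαW))
  · rintro - ⟨i, rfl⟩
    exact sub_mem (mem_sup_left (subset_span ⟨i, rfl⟩))
      (mem_sup_right (smul_mem _ _ (mem_span_singleton_self α)))
  · rintro - ⟨i, rfl⟩
    rw [← sub_add_cancel (x i) (c i • α)]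
    exact add_mem (subset_span ⟨i, rfl⟩) (smul_mem _ _ hαW)

theorem finrank_span_range_sub_smul_const_eq_succ_iff [FiniteDimensional K M] :
    finrank K (span K (range (x - fun i => c i • α))) = finrank K (span K (range x)) + 1 ↔
      α ∉ span K (range x) ∧ c ∉ rowSpace K x := by
  refine ⟨fun h => ⟨fun hα => ?_, fun hc => ?_⟩, fun ⟨hα, hc⟩ => ?_⟩
  · have := finrank_mono (span_range_sub_smul_const_le hα c)
    omega
  · have := finrank_span_range_sub_smul_const_le hc α
    omega
  · rw [span_range_sub_smul_const_eq_sup hc α, finrank_sup_span_singleton hα]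

theorem finrank_rowSpace [Fintype ι] [FiniteDimensional K M] (x : ι → M) :
    finrank K (rowSpace K x) = finrank K (span K (range x)) := by
  classical
  have : LinearMap.pi (fun i => Module.Dual.eval K M (x i)) =
      (Pi.basisFun K ι).dualBasis.equivFun.toLinearMap ∘ₗ
        (Fintype.linearCombination K x).dualMap := by
    ext φ i
    simp
  rw [rowSpace, this, LinearMap.range_comp, LinearEquiv.finrank_map_eq,
    LinearMap.finrank_range_dualMap_eq_finrank_range, Fintype.range_linearCombination]

theorem natCard_fiber_smul_const {V : Submodule K M} {R : Submodule K (ι → K)}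
    (p : {α : M // α ∉ V} × {c : ι → K // c ∉ R}) :
    Nat.card {p' : {α : M // α ∉ V} × {c : ι → K // c ∉ R} //
      (fun i => p'.2.1 i • p'.1.1) = fun i => p.2.1 i • p.1.1} = Nat.card Kˣ := by
  obtain ⟨⟨α₀, hα₀⟩, ⟨c₀, hc₀⟩⟩ := p
  have hα₀0 : α₀ ≠ 0 := fun h => hα₀ (h ▸ V.zero_mem)
  have hc₀0 : c₀ ≠ 0 := fun h => hc₀ (h ▸ R.zero_mem)
  let e (t : Kˣ) : {p' : {α : M // α ∉ V} × {c : ι → K // c ∉ R} //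
      (fun i => p'.2.1 i • p'.1.1) = fun i => c₀ i • α₀} :=
    ⟨(⟨t • α₀, by rwa [smul_mem_iff']⟩, ⟨t⁻¹ • c₀, by rwa [smul_mem_iff']⟩), by
      funext i
      simp [Units.smul_def, smul_smul, mul_comm]⟩
  refine (Nat.card_eq_of_bijective e ⟨?_, ?_⟩).symm
  · intro t s hts
    have : (t : K) • α₀ = (s : K) • α₀ := congrArg (fun p => p.1.1.1) hts
    exact Units.ext (smul_left_injective K hα₀0 this)
  · rintro ⟨⟨⟨α, hα⟩, ⟨c, hc⟩⟩, h⟩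
    obtain ⟨t, rfl, rfl⟩ := exists_units_of_smul_const_eq hc₀0 hα₀0 h
    exact ⟨t, rfl⟩

end VectorRank

/-- The number of rank-1 vectors y whose rank adds with that of a fixed rank-r vector x,
i.e. rk_q(x - y) = r + 1. -/
theorem card_rank_one_vectors_rank_additive
    (Fq Fqm : Type) [Field Fq] [Fintype Fq] [Field Fqm] [Fintype Fqm] [Algebra Fq Fqm]
    (q m n r : ℕ) (hq : Fintype.card Fq = q) (hm : Fintype.card Fqm = q ^ m)
    (x : Fin n → Fqm) (hx : rkq Fq x = r) :
    Nat.card {y : Fin n → Fqm // rkq Fq y = 1 ∧ rkq Fq (x - y) = r + 1} =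
      (q ^ n - q ^ r) * (q ^ m - q ^ r) / (q - 1) := by
  have : FiniteDimensional Fq Fqm := Module.Finite.of_finite
  let P := {α : Fqm // α ∉ span Fq (range x)} × {c : Fin n → Fq // c ∉ rowSpace Fq x}
  let g : P → Fin n → Fqm := fun p i => p.2.1 i • p.1.1
  have hcard : Nat.card {y : Fin n → Fqm // rkq Fq y = 1 ∧ rkq Fq (x - y) = r + 1} =
      Nat.card (range g) := by
    refine Nat.card_congr (Equiv.subtypeEquivRight fun y => ?_)
    rw [← hx]
    unfold rkq
    rw [finrank_span_range_eq_one_iff]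
    constructor
    · rintro ⟨⟨c, -, α, -, rfl⟩, h⟩
      obtain ⟨hα, hc⟩ := finrank_span_range_sub_smul_const_eq_succ_iff.1 h
      exact ⟨(⟨α, hα⟩, ⟨c, hc⟩), rfl⟩
    · rintro ⟨⟨⟨α, hα⟩, ⟨c, hc⟩⟩, rfl⟩
      exact ⟨⟨c, fun h => hc (h ▸ zero_mem _), α, fun h => hα (h ▸ zero_mem _), rfl⟩,
        finrank_span_range_sub_smul_const_eq_succ_iff.2 ⟨hα, hc⟩⟩
  have hP : Nat.card P = (q ^ m - q ^ r) * (q ^ n - q ^ r) := by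
    rw [Nat.card_prod, natCard_compl, natCard_compl, finrank_rowSpace, ← rkq, hx,
      Nat.card_fun, Nat.card_eq_fintype_card, Nat.card_eq_fintype_card, hq, hm, Nat.card_fin]
  have hfiber : Nat.card P = Nat.card (range g) * (q - 1) := by
    rw [← hq, ← Nat.card_eq_fintype_card, ← Nat.card_units]
    exact Nat.card_eq_card_range_mul_of_card_fiber g natCard_fiber_smul_const
  have hq1 : 0 < q - 1 := by
    have := hq ▸ Fintype.one_lt_card (α := Fq)
    omega
  rw [hcard]
  exact (Nat.div_eq_of_eq_mul_left hq1 (by rw [← hfiber, hP, mul_comm])).symm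
end
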